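/- arXiv:2311.12469 — 5 statements merged into one kernel-verified Lean document; each statement's English description precedes it below -/
import Mathlib

section
/- Let (𝔫, μ, ⟨·,·⟩) be a metric nilpotent Lie algebra with μ ≠ 0, let φ_μ be a pre-Einstein derivation of (𝔫, μ), and assume ⟨·,·⟩ is compatible with φ_μ. If (𝔫, μ, ⟨·,·⟩) is a nilsoliton, then there exists a ∈ ℝ such that Ric_μ = a·(id − φ_μ). -/
open scoped BigOperators RealInnerProductSpace

noncomputable section

variable {E : Type*} [NormedAddCommGroup E] [InnerProductSpace ℝ E] [FiniteDimensional ℝ E]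

/-- `μ` is a Lie bracket: alternating and satisfying the Jacobi identity. -/
def IsLieBracket (μ : E →ₗ[ℝ] E →ₗ[ℝ] E) : Prop :=
  (∀ X, μ X X = 0) ∧ ∀ X Y Z, μ X (μ Y Z) + μ Y (μ Z X) + μ Z (μ X Y) = 0

/-- `D` is a derivation of the bracket `μ`. -/
def IsDerivation (μ : E →ₗ[ℝ] E →ₗ[ℝ] E) (D : E →ₗ[ℝ] E) : Prop :=
  ∀ X Y, D (μ X Y) = μ (D X) Y + μ X (D Y)

/-- The bracket `μ` is nilpotent: all sufficiently long iterated brackets vanish. -/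
def IsNilpotentBracket (μ : E →ₗ[ℝ] E →ₗ[ℝ] E) : Prop :=
  ∃ k : ℕ, ∀ x : ℕ → E, (List.range k).foldr (fun i v => μ (x i) v) (x k) = 0

/-- `φ` is a pre-Einstein derivation of `μ`: a derivation, diagonalizable over `ℝ`,
with `tr(φ∘ψ) = tr(ψ)` for every derivation `ψ` of `μ`. -/
def IsPreEinstein (μ : E →ₗ[ℝ] E →ₗ[ℝ] E) (φ : E →ₗ[ℝ] E) : Prop :=
  IsDerivation μ φ ∧
  (∃ b : Module.Basis (Fin (Module.finrank ℝ E)) ℝ E, ∀ i, ∃ c : ℝ, φ (b i) = c • b i) ∧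
  ∀ ψ : E →ₗ[ℝ] E, IsDerivation μ ψ →
    LinearMap.trace ℝ E (φ ∘ₗ ψ) = LinearMap.trace ℝ E ψ

/-- The Ricci form of the metric Lie algebra `(E, μ, ⟪·,·⟫)`, computed in the
orthonormal basis `b`. -/
def ricci {n : ℕ} (b : OrthonormalBasis (Fin n) ℝ E) (μ : E →ₗ[ℝ] E →ₗ[ℝ] E)
    (X Y : E) : ℝ :=
  -(1/2) * ∑ i, ∑ j, ⟪μ X (b i), b j⟫ * ⟪μ Y (b i), b j⟫
    + (1/4) * ∑ i, ∑ j, ⟪μ (b i) (b j), X⟫ * ⟪μ (b i) (b j), Y⟫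

/-- `(E, μ, ⟪·,·⟫)` is a nilsoliton: the Ricci endomorphism equals `c·id + D`
for some `c ∈ ℝ` and some derivation `D` of `μ`. -/
def IsNilsoliton {n : ℕ} (b : OrthonormalBasis (Fin n) ℝ E)
    (μ : E →ₗ[ℝ] E →ₗ[ℝ] E) : Prop :=
  ∃ (Ric D : E →ₗ[ℝ] E) (c : ℝ),
    (∀ X Y, ⟪Ric X, Y⟫ = ricci b μ X Y) ∧ IsDerivation μ D ∧
      Ric = c • LinearMap.id + D

/-!
The Ricci form is symmetric, and `tr (Ric ∘ ψ) = 0` for every derivation `ψ`: after expanding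
in an orthonormal basis, the derivation rule and the antisymmetry of the bracket turn the
second term of the Ricci form into exactly minus the first. For a nilsoliton
`Ric = c • id + D`, the map `χ = Ric - c • (id - φ) = D + c • φ` is therefore a symmetric
derivation with `tr (χ ∘ χ) = tr (Ric ∘ χ) - c * (tr χ - tr (φ ∘ χ)) = 0`, the last bracket
vanishing because `φ` is pre-Einstein. A symmetric map with `tr (χ ∘ χ) = 0` is zero.
-/

section

variable {V ι : Type*} [NormedAddCommGroup V] [InnerProductSpace ℝ V] [Fintype ι]

theorem OrthonormalBasis.sum_inner_map_mul_inner (b : OrthonormalBasis ι ℝ V) (T : V →ₗ[ℝ] V)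
    (v w : V) : ∑ i, ⟪v, T (b i)⟫ * ⟪b i, w⟫ = ⟪v, T w⟫ := by
  conv_rhs => rw [← b.sum_repr' w]
  simp only [map_sum, map_smul, inner_sum, inner_smul_right, mul_comm]

theorem LinearMap.IsSymmetric.eq_zero_of_trace_comp_self [FiniteDimensional ℝ V]
    {T : V →ₗ[ℝ] V} (hT : T.IsSymmetric) (h : LinearMap.trace ℝ V (T ∘ₗ T) = 0) : T = 0 := by
  let b := stdOrthonormalBasis ℝ V
  have hsum : ∑ i, ⟪T (b i), T (b i)⟫ = 0 := by
    rw [← h, LinearMap.trace_eq_sum_inner _ b]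
    exact Finset.sum_congr rfl fun i _ => hT _ _
  have hb : ∀ i, T (b i) = 0 := fun i => inner_self_eq_zero.1 <|
    (Finset.sum_eq_zero_iff_of_nonneg fun _ _ => real_inner_self_nonneg).1 hsum i
      (Finset.mem_univ i)
  exact b.toBasis.ext fun i => by simpa using hb i

namespace IsDerivation

variable {μ : V →ₗ[ℝ] V →ₗ[ℝ] V} {D D' : V →ₗ[ℝ] V}

theorem add (hD : IsDerivation μ D) (hD' : IsDerivation μ D') : IsDerivation μ (D + D') :=
  fun X Y => by simp only [LinearMap.add_apply, hD X Y, hD' X Y, map_add]; abel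

theorem smul (c : ℝ) (hD : IsDerivation μ D) : IsDerivation μ (c • D) :=
  fun X Y => by simp only [LinearMap.smul_apply, hD X Y, map_smul, smul_add]

end IsDerivation

end

section Ricci

variable {V : Type*} [NormedAddCommGroup V] [InnerProductSpace ℝ V] {n : ℕ}
  (b : OrthonormalBasis (Fin n) ℝ V) (μ : V →ₗ[ℝ] V →ₗ[ℝ] V)

theorem ricci_comm (X Y : V) : ricci b μ X Y = ricci b μ Y X := by
  simp only [ricci, mul_comm]

theorem isSymmetric_of_inner_eq_ricci {Ric : V →ₗ[ℝ] V}
    (hRic : ∀ X Y, ⟪Ric X, Y⟫ = ricci b μ X Y) : Ric.IsSymmetric := fun X Y => by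
  rw [hRic, ricci_comm, ← hRic]
  exact real_inner_comm _ _

theorem ricci_eq_sum_inner (X Y : V) :
    ricci b μ X Y = -(1/2) * ∑ i, ⟪μ X (b i), μ Y (b i)⟫
      + (1/4) * ∑ i, ∑ j, ⟪μ (b i) (b j), X⟫ * ⟪μ (b i) (b j), Y⟫ := by
  rw [ricci]
  congr 2
  refine Finset.sum_congr rfl fun i _ => ?_
  rw [← b.sum_inner_mul_inner]
  simp only [real_inner_comm (μ Y (b i))]

theorem sum_ricci_map_eq_zero (hμ : μ.IsAlt) {ψ : V →ₗ[ℝ] V} (hψ : IsDerivation μ ψ) :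
    ∑ k, ricci b μ (ψ (b k)) (b k) = 0 := by
  have h : ∑ k, ∑ i, ∑ j, ⟪μ (b i) (b j), ψ (b k)⟫ * ⟪μ (b i) (b j), b k⟫
      = 2 * ∑ k, ∑ i, ⟪μ (ψ (b k)) (b i), μ (b k) (b i)⟫ := by
    calc _ = ∑ i, ∑ j, ⟪μ (b i) (b j), ψ (μ (b i) (b j))⟫ := by
          rw [Finset.sum_comm]
          refine Finset.sum_congr rfl fun i _ => ?_
          rw [Finset.sum_comm]
          refine Finset.sum_congr rfl fun j _ => ?_
          simp only [real_inner_comm (b _) (μ (b i) (b j)), b.sum_inner_map_mul_inner]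
      _ = ∑ i, ∑ j,
            (⟪μ (ψ (b i)) (b j), μ (b i) (b j)⟫ + ⟪μ (ψ (b j)) (b i), μ (b j) (b i)⟫) := by
          refine Finset.sum_congr rfl fun i _ => Finset.sum_congr rfl fun j _ => ?_
          rw [hψ, inner_add_right]
          congr 1
          · exact real_inner_comm _ _
          · rw [← hμ.neg (b j), ← hμ.neg (ψ (b j)), inner_neg_neg, real_inner_comm]
      _ = _ := by
          rw [Finset.sum_congr rfl fun i _ => Finset.sum_add_distrib, Finset.sum_add_distrib,
            Finset.sum_comm (f := fun i j => ⟪μ (ψ (b j)) (b i), μ (b j) (b i)⟫)]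
          ring
  simp only [ricci_eq_sum_inner, Finset.sum_add_distrib, ← Finset.mul_sum, h]
  ring

theorem trace_comp_eq_zero_of_isDerivation (hμ : μ.IsAlt) {Ric ψ : V →ₗ[ℝ] V}
    (hRic : ∀ X Y, ⟪Ric X, Y⟫ = ricci b μ X Y) (hψ : IsDerivation μ ψ) :
    LinearMap.trace ℝ V (Ric ∘ₗ ψ) = 0 := by
  rw [LinearMap.trace_eq_sum_inner _ b, ← sum_ricci_map_eq_zero b μ hμ hψ]
  exact Finset.sum_congr rfl fun k _ => by rw [real_inner_comm, LinearMap.comp_apply, hRic]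

end Ricci

theorem ricci_proportional_of_isNilsoliton_general {n : ℕ}
    (b : OrthonormalBasis (Fin n) ℝ E) (μ : E →ₗ[ℝ] E →ₗ[ℝ] E)
    (hμ : IsLieBracket μ)
    (φ : E →ₗ[ℝ] E) (hφ : IsPreEinstein μ φ) (hcompat : φ.IsSymmetric)
    (hsol : IsNilsoliton b μ) :
    ∀ Ric : E →ₗ[ℝ] E, (∀ X Y, ⟪Ric X, Y⟫ = ricci b μ X Y) →
      ∃ a : ℝ, Ric = a • (LinearMap.id - φ) := by
  intro Ric hRic
  obtain ⟨Ric₀, D, c, hRic₀, hD, hRic₀_eq⟩ := hsol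
  have hRic_eq : Ric = c • LinearMap.id + D := by
    rw [← hRic₀_eq]
    ext X
    exact ext_inner_right ℝ fun Y => by rw [hRic, hRic₀]
  set χ := Ric - c • (LinearMap.id - φ)
  have hχ_der : IsDerivation μ χ := by
    have : χ = D + c • φ := by simp only [χ, hRic_eq, smul_sub]; abel
    exact this ▸ hD.add (hφ.1.smul c)
  have hχ_sym : χ.IsSymmetric := (isSymmetric_of_inner_eq_ricci b μ hRic).sub
    ((LinearMap.IsSymmetric.id.sub hcompat).smul (conj_trivial c))
  have hχ_sq : LinearMap.trace ℝ E (χ ∘ₗ χ) = 0 := by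
    calc LinearMap.trace ℝ E (χ ∘ₗ χ)
        = LinearMap.trace ℝ E (Ric ∘ₗ χ)
          - c * (LinearMap.trace ℝ E χ - LinearMap.trace ℝ E (φ ∘ₗ χ)) := by
          simp only [χ, LinearMap.sub_comp, LinearMap.smul_comp, LinearMap.id_comp, map_sub,
            map_smul, smul_eq_mul, mul_sub]
      _ = 0 := by
          rw [trace_comp_eq_zero_of_isDerivation b μ hμ.1 hRic hχ_der, hφ.2.2 χ hχ_der]
          ring
  exact ⟨c, sub_eq_zero.1 (hχ_sym.eq_zero_of_trace_comp_self hχ_sq)⟩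

theorem ricci_proportional_of_isNilsoliton {n : ℕ} (hn : 1 ≤ n)
    (b : OrthonormalBasis (Fin n) ℝ E) (μ : E →ₗ[ℝ] E →ₗ[ℝ] E)
    (hμ : IsLieBracket μ) (hnil : IsNilpotentBracket μ) (hne : μ ≠ 0)
    (φ : E →ₗ[ℝ] E) (hφ : IsPreEinstein μ φ) (hcompat : φ.IsSymmetric)
    (hsol : IsNilsoliton b μ) :
    ∀ Ric : E →ₗ[ℝ] E, (∀ X Y, ⟪Ric X, Y⟫ = ricci b μ X Y) →
      ∃ a : ℝ, Ric = a • (LinearMap.id - φ) :=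
  ricci_proportional_of_isNilsoliton_general b μ hμ φ hφ hcompat hsol
end
end

section
/- Let (𝔫, μ, ⟨·,·⟩) be a metric nilpotent Lie algebra with μ ≠ 0, whose inner product is compatible with a pre-Einstein derivation φ_μ, and let B = {e_i} be an orthonormal basis of 𝔫 consisting of eigenvectors of φ_μ. Let 𝔭_B be the set of endomorphisms of 𝔫 that are diagonal with respect to B, say λ = diag(λ_1,…,λ_n), and satisfy tr((id − φ_μ)∘λ) = 0. Then ν(λ;μ) := −min{ λ_i + λ_j − λ_k : 1 ≤ i < j ≤ n, 1 ≤ k ≤ n, μ^k_{ij} ≠ 0 } > 0 for every λ ∈ 𝔭_B ∖ Der(μ) if and only if P₀ lies in the intrinsic interior (the interior within the affine span L_B) of the convex hull of F_B. -/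
open scoped BigOperators RealInnerProductSpace

noncomputable section

variable {E : Type*} [NormedAddCommGroup E] [InnerProductSpace ℝ E] [FiniteDimensional ℝ E]

/-- The Hilbert--Mumford weight `ν(λ;μ)` of a diagonal endomorphism with eigenvalues `l`
in the orthonormal basis `b`, relative to the bracket `μ`. -/
def nu {n : ℕ} (b : OrthonormalBasis (Fin n) ℝ E) (l : Fin n → ℝ)
    (μ : E →ₗ[ℝ] E →ₗ[ℝ] E) : ℝ :=
  -sInf {x : ℝ | ∃ i j k : Fin n, i < j ∧ ⟪μ (b i) (b j), b k⟫ ≠ 0 ∧ x = l i + l j - l k}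

/-- The finite subset `F_B = { e_i + e_j - e_k : i < j, μ^k_{ij} ≠ 0 }` of `E`. -/
def FB {n : ℕ} (b : OrthonormalBasis (Fin n) ℝ E) (μ : E →ₗ[ℝ] E →ₗ[ℝ] E) : Set E :=
  {x : E | ∃ i j k : Fin n, i < j ∧ ⟪μ (b i) (b j), b k⟫ ≠ 0 ∧ x = b i + b j - b k}

/-!
Identify a diagonal endomorphism `λ = diag(l)` with the vector `v = ∑ lᵢ eᵢ`, so that
`lᵢ + lⱼ - lₖ = ⟪v, eᵢ + eⱼ - eₖ⟫`. Then `λ ∈ Der(μ)` iff `v ⊥ F_B` (antisymmetry of `μ` handles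
`i ≥ j`), `ν(λ; μ) > 0` iff `⟪v, f⟫ < 0` for some `f ∈ F_B`, and `tr((id - φ)λ) = ⟪v, u⟫` for
`u = ∑ (1 - sᵢ) eᵢ`, the `sᵢ` being the eigenvalues of `φ`. As `φ` is a derivation, `⟪u, f⟫ = 1`
on `F_B`; the pre-Einstein identity, applied to the diagonal derivations (the `v ⊥ F_B`), puts `u`
in `span F_B`. Together these force `u = P₀ / ‖P₀‖²`, so the trace condition reads `v ⊥ P₀`.

It remains to see that `P₀` lies in the relative interior of `conv F_B` iff every `v ⊥ P₀` that is
not orthogonal to `F_B` is negative somewhere on `F_B`. Translated by `P₀` into the direction space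
of `L_B`, this is the supporting-hyperplane characterisation of interior points.
-/

lemma intrinsicInterior_eq_interior_of_affineSpan_eq_top {V : Type*} [NormedAddCommGroup V]
    [NormedSpace ℝ V] {s : Set V} (h : affineSpan ℝ s = ⊤) : intrinsicInterior ℝ s = interior s := by
  refine Set.Subset.antisymm ?_ interior_subset_intrinsicInterior
  have hopen : IsOpen (affineSpan ℝ s : Set V) := by simp [h]
  exact (hopen.isOpenMap_subtype_val.image_interior_subset _).trans
    (interior_mono (Set.image_preimage_subset _ _))

section ConvexGeometry

variable {W : Type*} [NormedAddCommGroup W] [InnerProductSpace ℝ W]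

lemma eq_zero_of_mem_span_of_forall_inner_eq_zero {S : Set W} {x : W}
    (hx : x ∈ Submodule.span ℝ S) (h : ∀ s ∈ S, ⟪x, s⟫ = 0) : x = 0 := by
  have hS : Submodule.span ℝ S ≤ (ℝ ∙ x)ᗮ := Submodule.span_le.2 fun s hs =>
    Submodule.mem_orthogonal_singleton_iff_inner_right.2 (h s hs)
  exact inner_self_eq_zero.1 (Submodule.mem_orthogonal_singleton_iff_inner_right.1 (hS hx))

lemma inner_eq_zero_iff_of_forall_inner_eq_one {F : Set W} {u p : W}
    (hu : u ∈ Submodule.span ℝ F) (huF : ∀ f ∈ F, ⟪u, f⟫ = 1)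
    (hp : p ∈ affineSpan ℝ F) (hp' : ∀ w ∈ affineSpan ℝ F, ⟪p, w - p⟫ = 0) (v : W) :
    ⟪v, u⟫ = 0 ↔ ⟪v, p⟫ = 0 := by
  have hup : ⟪u, p⟫ = 1 :=
    AffineMap.eqOn_affineSpan (f := (innerₛₗ ℝ u).toAffineMap) (g := AffineMap.const ℝ W 1)
      (fun f hf => huF f hf) hp
  have hp_eq : p = ⟪p, p⟫ • u := by
    rw [← sub_eq_zero]
    refine eq_zero_of_mem_span_of_forall_inner_eq_zero
      (sub_mem (affineSpan_subset_span hp) (Submodule.smul_mem _ _ hu)) fun f hf => ?_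
    have hpf := hp' f (subset_affineSpan ℝ F hf)
    rw [inner_sub_right, sub_eq_zero] at hpf
    rw [inner_sub_left, real_inner_smul_left, huF f hf, hpf, mul_one, sub_self]
  have hpp : ⟪p, p⟫ ≠ 0 := fun h => by
    rw [h, zero_smul] at hp_eq
    rw [hp_eq, inner_zero_right] at hup
    exact zero_ne_one hup
  rw [hp_eq, real_inner_smul_right, mul_eq_zero, or_iff_right hpp]

variable [FiniteDimensional ℝ W]

lemma zero_mem_interior_convexHull_iff {G : Set W} (hG : affineSpan ℝ G = ⊤) :
    0 ∈ interior (convexHull ℝ G) ↔ ∀ d : W, d ≠ 0 → ∃ g ∈ G, ⟪d, g⟫ < 0 := by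
  constructor
  · intro h0 d hd
    by_contra! hG
    have hK : convexHull ℝ G ⊆ {w | 0 ≤ ⟪d, w⟫} :=
      convexHull_min hG (convex_halfSpace_ge (innerₛₗ ℝ d).isLinear 0)
    -- a nonzero linear functional has no local minimum
    have hmin : IsLocalMin (innerSL ℝ d) 0 := by
      filter_upwards [mem_interior_iff_mem_nhds.1 h0] with x hx
      simpa using hK hx
    have hzero := hmin.fderiv_eq_zero
    rw [ContinuousLinearMap.fderiv] at hzero
    exact hd (by simpa using congrArg (· d) hzero)
  · intro h
    by_contra h0
    have hint : (interior (convexHull ℝ G)).Nonempty := by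
      rwa [(convex_convexHull ℝ G).interior_nonempty_iff_affineSpan_eq_top, affineSpan_convexHull]
    obtain ⟨f, hf, hle⟩ :=
      geometric_hahn_banach_of_nonempty_interior_point (convex_convexHull ℝ G) h0 hint
    set y := (InnerProductSpace.toDual ℝ W).symm f
    obtain ⟨g, hg, hlt⟩ := h (-y) (by simpa [y] using hf)
    have := hle g (subset_convexHull ℝ G hg)
    simp only [inner_neg_left, y, InnerProductSpace.toDual_symm_apply, map_zero] at hlt this
    linarith

lemma mem_intrinsicInterior_convexHull_iff {F : Set W} {p : W} (hp : p ∈ affineSpan ℝ F) :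
    p ∈ intrinsicInterior ℝ (convexHull ℝ F) ↔
      ∀ d ∈ (affineSpan ℝ F).direction, d ≠ 0 → ∃ f ∈ F, ⟪d, f - p⟫ < 0 := by
  set V := (affineSpan ℝ F).direction
  have hFV : ∀ f ∈ F, f - p ∈ V := fun f hf =>
    AffineSubspace.vsub_mem_direction (subset_affineSpan ℝ F hf) hp
  let ι : V →ᵃⁱ[ℝ] W :=
    (AffineIsometryEquiv.constVAdd ℝ W p).toAffineIsometry.comp V.subtypeₗᵢ.toAffineIsometry
  have hι : ∀ g : V, ι g = p + g := fun _ => rfl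
  set G := ι ⁻¹' F
  have hιG : ι '' G = F := Set.image_preimage_eq_of_subset fun f hf =>
    ⟨⟨f - p, hFV f hf⟩, by simp [hι]⟩
  have hG : affineSpan ℝ G = ⊤ := by
    have hGne : (affineSpan ℝ G : Set V).Nonempty := by
      rw [affineSpan_nonempty, ← Set.image_nonempty, hιG, ← affineSpan_nonempty (k := ℝ)]
      exact ⟨p, hp⟩
    rw [← AffineSubspace.direction_eq_top_iff_of_nonempty hGne]
    apply Submodule.map_injective_of_injective V.injective_subtype
    rw [Submodule.map_subtype_top]
    have := AffineSubspace.map_direction ι.toAffineMap (affineSpan ℝ G)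
    rw [AffineSubspace.map_span, ι.coe_toAffineMap, hιG] at this
    exact this.symm
  have hconv : convexHull ℝ F = ι '' convexHull ℝ G := by
    rw [← hιG, ← ι.coe_toAffineMap, AffineMap.image_convexHull]
  have hp0 : ι 0 = p := by simp [hι]
  rw [hconv, AffineIsometry.intrinsicInterior_image,
    intrinsicInterior_eq_interior_of_affineSpan_eq_top (by rwa [affineSpan_convexHull]),
    ← hp0, ι.injective.mem_set_image, hp0, zero_mem_interior_convexHull_iff hG]
  have hex : ∀ d : V, (∃ g ∈ G, ⟪d, g⟫ < 0) ↔ ∃ f ∈ F, ⟪(d : W), f - p⟫ < 0 := fun d =>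
    ⟨fun ⟨g, hg, hlt⟩ => ⟨p + g, hg, by simpa using hlt⟩,
      fun ⟨f, hf, hlt⟩ => ⟨⟨f - p, hFV f hf⟩, by simpa [G, hι] using hf, hlt⟩⟩
  simp only [hex, Subtype.forall, ne_eq, Submodule.mk_eq_zero]

lemma mem_intrinsicInterior_convexHull_iff_of_forall_inner_sub_eq_zero {F : Set W} {p : W}
    (hp : p ∈ affineSpan ℝ F) (hp' : ∀ w ∈ affineSpan ℝ F, ⟪p, w - p⟫ = 0) :
    p ∈ intrinsicInterior ℝ (convexHull ℝ F) ↔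
      ∀ v : W, ⟪v, p⟫ = 0 → (∃ f ∈ F, ⟪v, f⟫ ≠ 0) → ∃ f ∈ F, ⟪v, f⟫ < 0 := by
  set V := (affineSpan ℝ F).direction
  have hpV : ∀ d ∈ V, ⟪d, p⟫ = 0 := fun d hd => by
    have := hp' (d +ᵥ p) (AffineSubspace.vadd_mem_of_mem_direction hd hp)
    rwa [vadd_eq_add, add_sub_cancel_right, real_inner_comm] at this
  rw [mem_intrinsicInterior_convexHull_iff hp]
  constructor
  · rintro h v hvp ⟨f₀, hf₀, hvf₀⟩
    set d := V.starProjection v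
    have hvd : ∀ f ∈ F, ⟪v, f⟫ = ⟪d, f - p⟫ := fun f hf => by
      have hfp : f - p ∈ V := AffineSubspace.vsub_mem_direction (subset_affineSpan ℝ F hf) hp
      have := V.starProjection_inner_eq_zero v (f - p) hfp
      rw [inner_sub_left, inner_sub_right v, hvp] at this
      linarith
    have hd : d ≠ 0 := fun hd => hvf₀ (by rw [hvd f₀ hf₀, hd, inner_zero_left])
    obtain ⟨f, hf, hlt⟩ := h d (V.starProjection_apply_mem v) hd
    exact ⟨f, hf, by rwa [hvd f hf]⟩
  · intro h d hdV hd
    have hdF : ∃ f ∈ F, ⟪d, f⟫ ≠ 0 := by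
      by_contra! hdF
      refine hd (eq_zero_of_mem_span_of_forall_inner_eq_zero (S := F -ᵥ F) ?_ ?_)
      · rwa [← vectorSpan_def, ← direction_affineSpan]
      · rintro _ ⟨f₁, hf₁, f₂, hf₂, rfl⟩
        simp only [vsub_eq_sub, inner_sub_right, hdF f₁ hf₁, hdF f₂ hf₂, sub_zero]
    obtain ⟨f, hf, hlt⟩ := h d (hpV d hdV) hdF
    exact ⟨f, hf, by rwa [inner_sub_right, hpV d hdV, sub_zero]⟩

end ConvexGeometry

section DiagonalEndomorphisms

variable {W ι : Type*} [NormedAddCommGroup W] [InnerProductSpace ℝ W] [Fintype ι]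
  (b : OrthonormalBasis ι ℝ W)

def diagonalEnd (l : ι → ℝ) : W →ₗ[ℝ] W :=
  b.toBasis.constr ℝ fun i => l i • b i

lemma diagonalEnd_apply_basis (l : ι → ℝ) (i : ι) : diagonalEnd b l (b i) = l i • b i := by
  simpa only [diagonalEnd, OrthonormalBasis.coe_toBasis] using
    b.toBasis.constr_basis ℝ (fun i => l i • b i) i

variable {b} {T φ : W →ₗ[ℝ] W} {l s : ι → ℝ}

lemma inner_sum_smul_basis (l : ι → ℝ) (k : ι) : ⟪∑ i, l i • b i, b k⟫ = l k :=
  b.orthonormal.inner_left_fintype l k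

lemma inner_basis_apply_of_diagonal (hT : ∀ i, T (b i) = l i • b i) (k : ι) (x : W) :
    ⟪b k, T x⟫ = l k * ⟪b k, x⟫ := by
  rw [← b.sum_repr' x, map_sum]
  simp only [map_smul, hT, smul_smul, b.orthonormal.inner_right_fintype]
  exact mul_comm _ _

lemma trace_eq_sum_of_diagonal (hT : ∀ i, T (b i) = l i • b i) :
    LinearMap.trace ℝ W T = ∑ i, l i := by
  simp [LinearMap.trace_eq_sum_inner T b, hT, real_inner_smul_right]

lemma trace_id_sub_comp_of_diagonal (hφ : ∀ i, φ (b i) = s i • b i)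
    (hT : ∀ i, T (b i) = l i • b i) :
    LinearMap.trace ℝ W ((LinearMap.id - φ) ∘ₗ T) = ⟪∑ i, l i • b i, ∑ i, (1 - s i) • b i⟫ := by
  have hdiag : ∀ i, ((LinearMap.id - φ) ∘ₗ T) (b i) = ((1 - s i) * l i) • b i := fun i => by
    simp only [LinearMap.comp_apply, LinearMap.sub_apply, LinearMap.id_apply, hT, map_smul, hφ]
    module
  rw [trace_eq_sum_of_diagonal hdiag, inner_sum]
  simp only [real_inner_smul_right, inner_sum_smul_basis]

lemma isDerivation_iff_of_diagonal (μ : W →ₗ[ℝ] W →ₗ[ℝ] W) (hT : ∀ i, T (b i) = l i • b i) :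
    IsDerivation μ T ↔ ∀ i j k, ⟪μ (b i) (b j), b k⟫ ≠ 0 → l i + l j = l k := by
  have key : ∀ i j k, ⟪b k, T (μ (b i) (b j)) - (μ (T (b i)) (b j) + μ (b i) (T (b j)))⟫ =
      (l k - (l i + l j)) * ⟪μ (b i) (b j), b k⟫ := by
    intro i j k
    simp only [inner_sub_right, inner_add_right, inner_basis_apply_of_diagonal hT, hT, map_smul,
      LinearMap.smul_apply, real_inner_smul_right, real_inner_comm (b k)]
    ring
  constructor
  · intro hT i j k hc
    have hk := key i j k
    rw [hT, sub_self, inner_zero_right, eq_comm, mul_eq_zero, or_iff_left hc, sub_eq_zero] at hk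
    exact hk.symm
  · intro h
    have hbasis : ∀ i j, T (μ (b i) (b j)) = μ (T (b i)) (b j) + μ (b i) (T (b j)) := by
      intro i j
      refine InnerProductSpace.ext_inner_left_basis b.toBasis fun k => ?_
      rw [← sub_eq_zero, ← inner_sub_right, OrthonormalBasis.coe_toBasis, key]
      by_cases hc : ⟪μ (b i) (b j), b k⟫ = 0
      · rw [hc, mul_zero]
      · rw [h i j k hc, sub_self, zero_mul]
    have hbil : μ.compr₂ T = μ.comp T + μ.compl₂ T :=
      LinearMap.ext_basis b.toBasis b.toBasis fun i j => by simpa using hbasis i j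
    intro X Y
    simpa using LinearMap.congr_fun₂ hbil X Y

end DiagonalEndomorphisms

section WeightVectors

variable {W : Type*} [NormedAddCommGroup W] [InnerProductSpace ℝ W] {n : ℕ}
  {b : OrthonormalBasis (Fin n) ℝ W} {μ : W →ₗ[ℝ] W →ₗ[ℝ] W} {T φ : W →ₗ[ℝ] W} {l s : Fin n → ℝ}

lemma inner_sum_smul_basis_add_sub (l : Fin n → ℝ) (i j k : Fin n) :
    ⟪∑ t, l t • b t, b i + b j - b k⟫ = l i + l j - l k := by
  simp only [inner_sub_right, inner_add_right, inner_sum_smul_basis]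

lemma finite_FB (b : OrthonormalBasis (Fin n) ℝ W) (μ : W →ₗ[ℝ] W →ₗ[ℝ] W) : (FB b μ).Finite :=
  (Set.finite_range fun t : Fin n × Fin n × Fin n => b t.1 + b t.2.1 - b t.2.2).subset
    fun _ ⟨i, j, k, _, _, hx⟩ => ⟨(i, j, k), hx.symm⟩

lemma nu_eq_neg_sInf_image_FB :
    nu b l μ = -sInf ((fun f => ⟪∑ i, l i • b i, f⟫) '' FB b μ) := by
  unfold nu
  congr 2
  ext x
  constructor
  · rintro ⟨i, j, k, hij, hc, rfl⟩
    exact ⟨_, ⟨i, j, k, hij, hc, rfl⟩, inner_sum_smul_basis_add_sub l i j k⟩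
  · rintro ⟨_, ⟨i, j, k, hij, hc, rfl⟩, rfl⟩
    exact ⟨i, j, k, hij, hc, inner_sum_smul_basis_add_sub l i j k⟩

lemma zero_lt_nu_iff : 0 < nu b l μ ↔ ∃ f ∈ FB b μ, ⟪∑ i, l i • b i, f⟫ < 0 := by
  rw [nu_eq_neg_sInf_image_FB, neg_pos]
  rcases (FB b μ).eq_empty_or_nonempty with hF | hF
  · simp [hF]
  · rw [csInf_lt_iff ((finite_FB b μ).image _).bddBelow (hF.image _), Set.exists_mem_image]

lemma isDerivation_iff_forall_inner_FB_eq_zero (hμ : μ.IsAlt) (hT : ∀ i, T (b i) = l i • b i) :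
    IsDerivation μ T ↔ ∀ f ∈ FB b μ, ⟪∑ i, l i • b i, f⟫ = 0 := by
  rw [isDerivation_iff_of_diagonal μ hT]
  constructor
  · rintro h _ ⟨i, j, k, -, hc, rfl⟩
    rw [inner_sum_smul_basis_add_sub, h i j k hc, sub_self]
  · intro h i j k hc
    rcases lt_trichotomy i j with hij | rfl | hij
    · have := h _ ⟨i, j, k, hij, hc, rfl⟩
      rw [inner_sum_smul_basis_add_sub] at this
      linarith
    · exact absurd (by rw [hμ.self_eq_zero, inner_zero_left]) hc
    · have hc' : ⟪μ (b j) (b i), b k⟫ ≠ 0 := by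
        rwa [← hμ.neg, inner_neg_left, neg_ne_zero]
      have := h _ ⟨j, i, k, hij, hc', rfl⟩
      rw [inner_sum_smul_basis_add_sub] at this
      linarith

lemma inner_FB_eq_one (hφ : IsDerivation μ φ) (hb : ∀ i, φ (b i) = s i • b i) :
    ∀ f ∈ FB b μ, ⟪∑ i, (1 - s i) • b i, f⟫ = 1 := by
  rintro _ ⟨i, j, k, -, hc, rfl⟩
  have := (isDerivation_iff_of_diagonal μ hb).1 hφ i j k hc
  rw [inner_sum_smul_basis_add_sub]
  linarith

lemma sum_smul_basis_mem_span_FB [FiniteDimensional ℝ W] (hμ : μ.IsAlt)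
    (hφ : ∀ ψ, IsDerivation μ ψ → LinearMap.trace ℝ W (φ ∘ₗ ψ) = LinearMap.trace ℝ W ψ)
    (hb : ∀ i, φ (b i) = s i • b i) :
    ∑ i, (1 - s i) • b i ∈ Submodule.span ℝ (FB b μ) := by
  rw [← Submodule.orthogonal_orthogonal (Submodule.span ℝ (FB b μ)), Submodule.mem_orthogonal]
  intro w hw
  set l : Fin n → ℝ := fun i => ⟪b i, w⟫
  have hlw : ∑ i, l i • b i = w := b.sum_repr' w
  have hder : IsDerivation μ (diagonalEnd b l) :=
    (isDerivation_iff_forall_inner_FB_eq_zero hμ (diagonalEnd_apply_basis b l)).2 fun f hf => by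
      rw [hlw]
      exact Submodule.inner_left_of_mem_orthogonal (Submodule.subset_span hf) hw
  have htr := trace_id_sub_comp_of_diagonal hb (diagonalEnd_apply_basis b l)
  rw [hlw, LinearMap.sub_comp, map_sub, hφ _ hder, LinearMap.id_comp, sub_self] at htr
  exact htr.symm

lemma forall_zero_lt_nu_iff (hμ : μ.IsAlt) (hb : ∀ i, φ (b i) = s i • b i) :
    (∀ (lam : W →ₗ[ℝ] W) (l : Fin n → ℝ), (∀ i, lam (b i) = l i • b i) →
      LinearMap.trace ℝ W ((LinearMap.id - φ) ∘ₗ lam) = 0 → ¬ IsDerivation μ lam →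
      0 < nu b l μ) ↔
    ∀ v : W, ⟪v, ∑ i, (1 - s i) • b i⟫ = 0 → (∃ f ∈ FB b μ, ⟪v, f⟫ ≠ 0) →
      ∃ f ∈ FB b μ, ⟪v, f⟫ < 0 := by
  constructor
  · intro h v hv hvF
    set l : Fin n → ℝ := fun i => ⟪b i, v⟫
    have hlv : ∑ i, l i • b i = v := b.sum_repr' v
    have hl := diagonalEnd_apply_basis b l
    refine hlv ▸ zero_lt_nu_iff.1 (h _ l hl ?_ ?_)
    · rwa [trace_id_sub_comp_of_diagonal hb hl, hlv]
    · simpa [isDerivation_iff_forall_inner_FB_eq_zero hμ hl, hlv] using hvF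
  · intro h lam l hl htr hder
    rw [trace_id_sub_comp_of_diagonal hb hl] at htr
    rw [isDerivation_iff_forall_inner_FB_eq_zero hμ hl] at hder
    simp only [not_forall, exists_prop] at hder
    exact zero_lt_nu_iff.2 (h _ htr hder)

end WeightVectors

theorem hmWeight_pos_iff_proj_mem_intrinsicInterior_general {n : ℕ}
    (μ : E →ₗ[ℝ] E →ₗ[ℝ] E) (hμ : IsLieBracket μ)
    (φ : E →ₗ[ℝ] E) (hφ : IsPreEinstein μ φ)
    (b : OrthonormalBasis (Fin n) ℝ E) (s : Fin n → ℝ) (hb : ∀ i, φ (b i) = s i • b i)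
    (P₀ : E) (hP₀ : P₀ ∈ affineSpan ℝ (FB b μ))
    (hP₀' : ∀ w ∈ affineSpan ℝ (FB b μ), ⟪P₀, w - P₀⟫ = 0) :
    (∀ (lam : E →ₗ[ℝ] E) (l : Fin n → ℝ), (∀ i, lam (b i) = l i • b i) →
      LinearMap.trace ℝ E ((LinearMap.id - φ) ∘ₗ lam) = 0 → ¬ IsDerivation μ lam →
      0 < nu b l μ) ↔
    P₀ ∈ intrinsicInterior ℝ (convexHull ℝ (FB b μ)) := by
  have hu := inner_eq_zero_iff_of_forall_inner_eq_one
    (sum_smul_basis_mem_span_FB hμ.1 hφ.2.2 hb) (inner_FB_eq_one hφ.1 hb) hP₀ hP₀'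
  rw [forall_zero_lt_nu_iff hμ.1 hb,
    mem_intrinsicInterior_convexHull_iff_of_forall_inner_sub_eq_zero hP₀ hP₀']
  simp only [hu]

theorem hmWeight_pos_iff_proj_mem_intrinsicInterior {n : ℕ} (hn : 1 ≤ n)
    (μ : E →ₗ[ℝ] E →ₗ[ℝ] E) (hμ : IsLieBracket μ) (hnil : IsNilpotentBracket μ)
    (hne : μ ≠ 0) (φ : E →ₗ[ℝ] E) (hφ : IsPreEinstein μ φ) (hcompat : φ.IsSymmetric)
    (b : OrthonormalBasis (Fin n) ℝ E) (s : Fin n → ℝ) (hb : ∀ i, φ (b i) = s i • b i)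
    (P₀ : E) (hP₀ : P₀ ∈ affineSpan ℝ (FB b μ))
    (hP₀' : ∀ w ∈ affineSpan ℝ (FB b μ), ⟪P₀, w - P₀⟫ = 0) :
    (∀ (lam : E →ₗ[ℝ] E) (l : Fin n → ℝ), (∀ i, lam (b i) = l i • b i) →
      LinearMap.trace ℝ E ((LinearMap.id - φ) ∘ₗ lam) = 0 → ¬ IsDerivation μ lam →
      0 < nu b l μ) ↔
    P₀ ∈ intrinsicInterior ℝ (convexHull ℝ (FB b μ)) :=
  hmWeight_pos_iff_proj_mem_intrinsicInterior_general μ hμ φ hφ b s hb P₀ hP₀ hP₀'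

end
end

section
/- Let (𝔫, μ, ⟨·,·⟩) be a metric nilpotent Lie algebra with μ ≠ 0, whose inner product is compatible with a pre-Einstein derivation φ_μ, and let B = {e_i} be an orthonormal basis of 𝔫 consisting of eigenvectors of φ_μ. Enumerate F_B = {f_1, …, f_m} and let Y_B be the m × n real matrix with entries (Y_B)_{pq} := ⟨f_p, e_q⟩ (so that Y_B Y_Bᵗ is the Gram matrix ⟨f_p, f_q⟩). Then P₀ lies in the intrinsic interior of the convex hull of F_B if and only if there exist α_1, …, α_m > 0 with Σ_{p=1}^m α_p = ‖P₀‖^{-2} and Y_B Y_Bᵗ (α_1, …, α_m)ᵗ = (1, …, 1)ᵗ. (Here ‖P₀‖ ≠ 0.) -/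
/-!
Since `φ` is a derivation diagonal in `b`, `s i + s j = s k` whenever `μ^k_{ij} ≠ 0`, so `F_B`
lies on the affine hyperplane `⟪h, ·⟫ = 1` with `h = ∑ q, (1 + s q) • b q`; hence `P₀ ≠ 0`.
A point is in the intrinsic interior of the convex hull of finitely many points `f p` iff it is
a convex combination of them with all weights positive. As `P₀` is the foot of the perpendicular
from the origin to `L_B`, `⟪P₀, x⟫ = ‖P₀‖²` on `L_B`, and `P₀` is the only point of `L_B` with
`⟪·, f p⟫` constant in `p`. So `P₀ = ∑ p, w p • f p` with `∑ w = 1` iff `α = w / ‖P₀‖²` solves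
`⟪f p, ∑ q, α q • f q⟫ = 1`, which is the Gram system `Y Yᵀ α = 1`.
-/

open scoped BigOperators RealInnerProductSpace

noncomputable section

variable {E : Type*} [NormedAddCommGroup E] [InnerProductSpace ℝ E] [FiniteDimensional ℝ E]

open Set

section ConvexCombination

variable {V : Type*} [AddCommGroup V] [Module ℝ V] {ι : Type*} [Fintype ι] {f : ι → V} {x : V}

theorem mem_convexHull_range_iff_exists_sum :
    x ∈ convexHull ℝ (range f) ↔
      ∃ w : ι → ℝ, (∀ i, 0 ≤ w i) ∧ ∑ i, w i = 1 ∧ ∑ i, w i • f i = x := by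
  classical
  have hrange : range f = Fintype.linearCombination ℝ f '' range fun i ↦ Pi.single i 1 := by
    rw [← range_comp]
    congr 1
    ext i
    simp [Fintype.linearCombination_apply_single]
  rw [hrange, ← LinearMap.image_convexHull, convexHull_rangle_single_eq_stdSimplex]
  simp [stdSimplex, Fintype.linearCombination_apply, and_assoc]

theorem sum_mul_add_mul_smul (ν κ : ι → ℝ) (a b : ℝ) :
    ∑ i, (a * ν i + b * κ i) • f i = a • ∑ i, ν i • f i + b • ∑ i, κ i • f i := by
  simp only [add_smul, mul_smul, Finset.sum_add_distrib, Finset.smul_sum]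

end ConvexCombination

section IntrinsicInterior

variable {V : Type*} [NormedAddCommGroup V] [NormedSpace ℝ V] {s : Set V} {x y c : V}

theorem Convex.combo_intrinsicInterior_self_mem_intrinsicInterior (hs : Convex ℝ s)
    (hx : x ∈ intrinsicInterior ℝ s) (hy : y ∈ s) {a b : ℝ} (ha : 0 < a) (hb : 0 ≤ b)
    (hab : a + b = 1) : a • x + b • y ∈ intrinsicInterior ℝ s := by
  -- The homothety of ratio `a` centred at `y` is an open self-map of `affineSpan ℝ s`
  -- preserving `s`.
  obtain ⟨x', hx', rfl⟩ := hx
  have : Nonempty (affineSpan ℝ s) := ⟨x'⟩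
  let h := AffineMap.homothety (⟨y, subset_affineSpan ℝ s hy⟩ : affineSpan ℝ s) a
  have hh : ∀ p, (h p : V) = a • (p : V) + b • y := fun p ↦ by
    rw [eq_sub_of_add_eq' hab]
    simp only [h, AffineMap.homothety_apply, AffineSubspace.coe_vadd, SetLike.val_smul,
      AffineSubspace.coe_vsub, vsub_eq_sub, vadd_eq_add]
    module
  have hmaps : MapsTo h ((↑) ⁻¹' s) ((↑) ⁻¹' s) := fun p hp ↦ by
    simpa [mem_preimage, hh] using hs hp hy ha.le hb hab
  refine ⟨h x', ?_, hh x'⟩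
  exact interior_mono hmaps.image_subset
    ((AffineMap.homothety_isOpenMap _ a ha.ne').image_interior_subset _ (mem_image_of_mem h hx'))

theorem exists_add_smul_sub_mem_of_mem_intrinsicInterior (hx : x ∈ intrinsicInterior ℝ s)
    (hc : c ∈ affineSpan ℝ s) : ∃ t : ℝ, 0 < t ∧ x + t • (x - c) ∈ s := by
  obtain ⟨x', hx', rfl⟩ := hx
  have : Nonempty (affineSpan ℝ s) := ⟨x'⟩
  obtain ⟨δ, hδ, hδs⟩ := (eventually_homothety_mem_of_mem_interior ℝ
    (⟨c, hc⟩ : affineSpan ℝ s) hx').exists_gt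
  refine ⟨δ - 1, sub_pos.mpr hδ, ?_⟩
  have hδx : (x' : V) + (δ - 1) • (x' - c) =
      AffineMap.homothety (⟨c, hc⟩ : affineSpan ℝ s) δ x' := by
    simp only [AffineMap.homothety_apply, AffineSubspace.coe_vadd, SetLike.val_smul,
      AffineSubspace.coe_vsub, vsub_eq_sub, vadd_eq_add]
    module
  exact hδx ▸ hδs

section FiniteFamily

variable {ι : Type*} [Fintype ι] {f : ι → V}

theorem exists_pos_weights_of_mem_intrinsicInterior_convexHull
    (hx : x ∈ intrinsicInterior ℝ (convexHull ℝ (range f))) :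
    ∃ w : ι → ℝ, (∀ i, 0 < w i) ∧ ∑ i, w i = 1 ∧ ∑ i, w i • f i = x := by
  obtain ⟨ν, -, hν₁, -⟩ := mem_convexHull_range_iff_exists_sum.mp (intrinsicInterior_subset hx)
  have : Nonempty ι := by
    by_contra h
    simp [not_nonempty_iff.mp h] at hν₁
  -- `x + t • (x - c)` is in the hull for small `t > 0`, where the barycenter `c` has positive
  -- weights; `x` is a convex combination of these two points.
  set κ : ι → ℝ := fun _ ↦ (Fintype.card ι : ℝ)⁻¹
  have hκ₁ : ∑ i, κ i = 1 := by simp [κ]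
  have hc : ∑ i, κ i • f i ∈ affineSpan ℝ (convexHull ℝ (range f)) :=
    subset_affineSpan ℝ _ (mem_convexHull_range_iff_exists_sum.mpr
      ⟨κ, fun _ ↦ by positivity, hκ₁, rfl⟩)
  obtain ⟨t, ht, hy⟩ := exists_add_smul_sub_mem_of_mem_intrinsicInterior hx hc
  obtain ⟨θ, hθ₀, hθ₁, hθy⟩ := mem_convexHull_range_iff_exists_sum.mp hy
  refine ⟨fun i ↦ (1 + t)⁻¹ * θ i + (t / (1 + t)) * κ i, fun i ↦ add_pos_of_nonneg_of_pos
    (mul_nonneg (by positivity) (hθ₀ i)) (by positivity), ?_, ?_⟩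
  · simp only [Finset.sum_add_distrib, ← Finset.mul_sum, hθ₁, hκ₁]
    field_simp
  · rw [sum_mul_add_mul_smul, hθy]
    match_scalars <;> field_simp
    ring

theorem mem_intrinsicInterior_convexHull_of_pos_weights [FiniteDimensional ℝ V] {w : ι → ℝ}
    (hw₀ : ∀ i, 0 < w i) (hw₁ : ∑ i, w i = 1) :
    ∑ i, w i • f i ∈ intrinsicInterior ℝ (convexHull ℝ (range f)) := by
  have hs : (convexHull ℝ (range f)).Nonempty :=
    ⟨_, mem_convexHull_range_iff_exists_sum.mpr ⟨w, fun i ↦ (hw₀ i).le, hw₁, rfl⟩⟩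
  obtain ⟨z, hz⟩ := hs.intrinsicInterior (convex_convexHull ℝ _)
  obtain ⟨ν, hν₀, hν₁, rfl⟩ := mem_convexHull_range_iff_exists_sum.mp (intrinsicInterior_subset hz)
  have : Nonempty ι := by
    by_contra h
    simp [not_nonempty_iff.mp h] at hw₁
  obtain ⟨i₀, hi₀⟩ := Finite.exists_min w
  set ε := w i₀
  have hε : 0 < ε := hw₀ i₀
  have hν_le : ∀ i, ν i ≤ 1 := fun i ↦
    hν₁ ▸ Finset.single_le_sum (fun j _ ↦ hν₀ j) (Finset.mem_univ i)
  -- `x := ∑ w i • f i` lies on the open segment from `z` to `x + ε • (x - z)`, which is still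
  -- in the hull.
  have hy : ∑ i, ((1 + ε) * w i + (-ε) * ν i) • f i ∈ convexHull ℝ (range f) := by
    refine mem_convexHull_range_iff_exists_sum.mpr ⟨_, fun i ↦ ?_, ?_, rfl⟩
    · nlinarith [hν_le i, hν₀ i, hi₀ i, hw₀ i]
    · simp only [Finset.sum_add_distrib, ← Finset.mul_sum, hw₁, hν₁]
      ring
  have := (convex_convexHull ℝ _).combo_intrinsicInterior_self_mem_intrinsicInterior hz hy
    (a := ε / (1 + ε)) (b := 1 / (1 + ε)) (by positivity) (by positivity) (by field_simp; ring)
  convert this using 1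
  rw [sum_mul_add_mul_smul]
  match_scalars <;> field_simp
  ring

theorem mem_intrinsicInterior_convexHull_range_iff [FiniteDimensional ℝ V] :
    x ∈ intrinsicInterior ℝ (convexHull ℝ (range f)) ↔
      ∃ w : ι → ℝ, (∀ i, 0 < w i) ∧ ∑ i, w i = 1 ∧ ∑ i, w i • f i = x :=
  ⟨exists_pos_weights_of_mem_intrinsicInterior_convexHull, fun ⟨_, hw₀, hw₁, hx⟩ ↦
    hx ▸ mem_intrinsicInterior_convexHull_of_pos_weights hw₀ hw₁⟩

end FiniteFamily

end IntrinsicInterior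

section Euclidean

open Matrix

variable {V : Type*} [NormedAddCommGroup V] [InnerProductSpace ℝ V]

theorem inner_eq_of_mem_affineSpan {S : Set V} {h : V} {c : ℝ} (hS : S ⊆ {x | ⟪h, x⟫ = c})
    {x : V} (hx : x ∈ affineSpan ℝ S) : ⟪h, x⟫ = c :=
  AffineMap.eqOn_affineSpan (f := (innerₛₗ ℝ h).toAffineMap) (g := AffineMap.const ℝ V c) hS hx

theorem eq_of_inner_eq_inner_self {u v : V} (hu : ⟪u, v⟫ = ⟪u, u⟫) (hv : ⟪v, u⟫ = ⟪v, v⟫) :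
    u = v := by
  rw [← sub_eq_zero, ← inner_self_eq_zero (𝕜 := ℝ), inner_sub_left, inner_sub_right,
    inner_sub_right, hu, hv]
  ring

theorem Matrix.gram_mulVec_apply {ι : Type*} [Fintype ι] (f : ι → V) (α : ι → ℝ) (i : ι) :
    (gram ℝ f *ᵥ α) i = ⟪f i, ∑ j, α j • f j⟫ := by
  simp [mulVec, dotProduct, gram, inner_sum, real_inner_smul_right, mul_comm]

theorem OrthonormalBasis.mul_transpose_eq_gram {ι κ : Type*} [Fintype κ]
    (b : OrthonormalBasis κ ℝ V) (f : ι → V) :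
    (of fun i k ↦ ⟪f i, b k⟫) * (of fun i k ↦ ⟪f i, b k⟫)ᵀ = gram ℝ f := by
  ext i j
  simp only [mul_apply, transpose_apply, of_apply, gram]
  rw [← b.sum_inner_mul_inner]
  exact Finset.sum_congr rfl fun k _ ↦ by rw [real_inner_comm (f j)]

theorem exists_pos_weights_iff_gram_mulVec_eq_one {ι : Type*} [Fintype ι] {f : ι → V} {P₀ : V}
    (hP₀ : P₀ ∈ affineSpan ℝ (range f))
    (hP₀' : ∀ w ∈ affineSpan ℝ (range f), ⟪P₀, w - P₀⟫ = 0) (hne : P₀ ≠ 0) :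
    (∃ w : ι → ℝ, (∀ i, 0 < w i) ∧ ∑ i, w i = 1 ∧ ∑ i, w i • f i = P₀) ↔
      ∃ α : ι → ℝ, (∀ i, 0 < α i) ∧ ∑ i, α i = (‖P₀‖ ^ 2)⁻¹ ∧
        gram ℝ f *ᵥ α = fun _ ↦ 1 := by
  have hfoot : ∀ x ∈ affineSpan ℝ (range f), ⟪P₀, x⟫ = ‖P₀‖ ^ 2 := fun x hx ↦ by
    rw [← real_inner_self_eq_norm_sq, ← sub_eq_zero, ← inner_sub_right, hP₀' x hx]
  have hr : 0 < ‖P₀‖ ^ 2 := by positivity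
  simp_rw [funext_iff, Matrix.gram_mulVec_apply]
  constructor
  · rintro ⟨w, hw₀, hw₁, hwP⟩
    refine ⟨fun i ↦ (‖P₀‖ ^ 2)⁻¹ * w i, fun i ↦ mul_pos (inv_pos.mpr hr) (hw₀ i),
      by rw [← Finset.mul_sum, hw₁, mul_one], fun i ↦ ?_⟩
    simp only [mul_smul, ← Finset.smul_sum, hwP, real_inner_smul_right, real_inner_comm,
      hfoot (f i) (subset_affineSpan ℝ _ (mem_range_self i))]
    exact inv_mul_cancel₀ hr.ne'
  · rintro ⟨α, hα₀, hα₁, hα⟩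
    set v := ∑ i, (‖P₀‖ ^ 2 * α i) • f i
    have hv₁ : ∑ i, ‖P₀‖ ^ 2 * α i = 1 := by rw [← Finset.mul_sum, hα₁, mul_inv_cancel₀ hr.ne']
    have hv : v ∈ affineSpan ℝ (range f) := convexHull_subset_affineSpan _ <|
      mem_convexHull_range_iff_exists_sum.mpr ⟨_, fun i ↦ (mul_pos hr (hα₀ i)).le, hv₁, rfl⟩
    have hvf : ∀ x ∈ affineSpan ℝ (range f), ⟪v, x⟫ = ‖P₀‖ ^ 2 := by
      refine fun x ↦ inner_eq_of_mem_affineSpan ?_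
      rintro _ ⟨i, rfl⟩
      simp only [mem_ofPred_eq, v, mul_smul, ← Finset.smul_sum, real_inner_comm,
        real_inner_smul_right, hα i, mul_one]
    refine ⟨_, fun i ↦ mul_pos hr (hα₀ i), hv₁, eq_of_inner_eq_inner_self ?_ ?_⟩
    · rw [hvf _ hP₀, hvf _ hv]
    · rw [hfoot _ hv, hfoot _ hP₀]

end Euclidean

section DerivationEigenbasis

variable {V : Type*} [NormedAddCommGroup V] [InnerProductSpace ℝ V]

theorem OrthonormalBasis.inner_map_of_apply_eq_smul {ι : Type*} [Fintype ι]
    (b : OrthonormalBasis ι ℝ V) {φ : V →ₗ[ℝ] V} {s : ι → ℝ} (hb : ∀ i, φ (b i) = s i • b i)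
    (v : V) (k : ι) : ⟪φ v, b k⟫ = s k * ⟪v, b k⟫ := by
  conv_lhs => rw [← b.sum_repr' v]
  simp only [map_sum, map_smul, hb, smul_smul]
  rw [b.orthonormal.inner_left_fintype]
  simp [mul_comm, real_inner_comm]

theorem IsDerivation.add_eq_of_inner_ne_zero {n : ℕ} {μ : V →ₗ[ℝ] V →ₗ[ℝ] V} {φ : V →ₗ[ℝ] V}
    (hφ : IsDerivation μ φ) {b : OrthonormalBasis (Fin n) ℝ V} {s : Fin n → ℝ}
    (hb : ∀ i, φ (b i) = s i • b i) {i j k : Fin n} (hijk : ⟪μ (b i) (b j), b k⟫ ≠ 0) :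
    s i + s j = s k := by
  have hφμ : φ (μ (b i) (b j)) = (s i + s j) • μ (b i) (b j) := by
    rw [hφ, hb, hb]
    simp only [map_smul, LinearMap.smul_apply, add_smul]
  have := b.inner_map_of_apply_eq_smul hb (μ (b i) (b j)) k
  rw [hφμ, real_inner_smul_left] at this
  exact mul_right_cancel₀ hijk this

theorem FB_subset_inner_eq_one {n : ℕ} {μ : V →ₗ[ℝ] V →ₗ[ℝ] V} {φ : V →ₗ[ℝ] V}
    (hφ : IsDerivation μ φ) {b : OrthonormalBasis (Fin n) ℝ V} {s : Fin n → ℝ}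
    (hb : ∀ i, φ (b i) = s i • b i) :
    FB b μ ⊆ {x | ⟪∑ q, (1 + s q) • b q, x⟫ = 1} := by
  rintro _ ⟨i, j, k, -, hijk, rfl⟩
  have := hφ.add_eq_of_inner_ne_zero hb hijk
  simp only [mem_ofPred_eq, inner_sub_right, inner_add_right, b.orthonormal.inner_left_fintype,
    conj_trivial]
  linarith

end DerivationEigenbasis

theorem proj_mem_intrinsicInterior_iff_linear_system_general {n : ℕ}
    (μ : E →ₗ[ℝ] E →ₗ[ℝ] E) (φ : E →ₗ[ℝ] E) (hφ : IsPreEinstein μ φ)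
    (b : OrthonormalBasis (Fin n) ℝ E) (s : Fin n → ℝ) (hb : ∀ i, φ (b i) = s i • b i)
    (m : ℕ) (f : Fin m → E)
    (hfrange : Set.range f = FB b μ)
    (P₀ : E) (hP₀ : P₀ ∈ affineSpan ℝ (FB b μ))
    (hP₀' : ∀ w ∈ affineSpan ℝ (FB b μ), ⟪P₀, w - P₀⟫ = 0) :
    ‖P₀‖ ≠ 0 ∧
    (P₀ ∈ intrinsicInterior ℝ (convexHull ℝ (FB b μ)) ↔
      ∃ α : Fin m → ℝ, (∀ p, 0 < α p) ∧ (∑ p, α p) = (‖P₀‖ ^ 2)⁻¹ ∧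
        ((Matrix.of fun p q => ⟪f p, b q⟫ : Matrix (Fin m) (Fin n) ℝ) *
          Matrix.transpose (Matrix.of fun p q => ⟪f p, b q⟫ : Matrix (Fin m) (Fin n) ℝ)).mulVec α =
          fun _ => 1) := by
  have hP₀ne : P₀ ≠ 0 := by
    rintro rfl
    simpa using inner_eq_of_mem_affineSpan (FB_subset_inner_eq_one hφ.1 hb) hP₀
  rw [← hfrange] at hP₀ hP₀' ⊢
  rw [mem_intrinsicInterior_convexHull_range_iff, b.mul_transpose_eq_gram]
  exact ⟨norm_ne_zero_iff.mpr hP₀ne, exists_pos_weights_iff_gram_mulVec_eq_one hP₀ hP₀' hP₀ne⟩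

theorem proj_mem_intrinsicInterior_iff_linear_system {n : ℕ} (hn : 1 ≤ n)
    (μ : E →ₗ[ℝ] E →ₗ[ℝ] E) (hμ : IsLieBracket μ) (hnil : IsNilpotentBracket μ)
    (hne : μ ≠ 0) (φ : E →ₗ[ℝ] E) (hφ : IsPreEinstein μ φ) (hcompat : φ.IsSymmetric)
    (b : OrthonormalBasis (Fin n) ℝ E) (s : Fin n → ℝ) (hb : ∀ i, φ (b i) = s i • b i)
    (m : ℕ) (f : Fin m → E) (hfinj : Function.Injective f)
    (hfrange : Set.range f = FB b μ)
    (P₀ : E) (hP₀ : P₀ ∈ affineSpan ℝ (FB b μ))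
    (hP₀' : ∀ w ∈ affineSpan ℝ (FB b μ), ⟪P₀, w - P₀⟫ = 0) :
    ‖P₀‖ ≠ 0 ∧
    (P₀ ∈ intrinsicInterior ℝ (convexHull ℝ (FB b μ)) ↔
      ∃ α : Fin m → ℝ, (∀ p, 0 < α p) ∧ (∑ p, α p) = (‖P₀‖ ^ 2)⁻¹ ∧
        ((Matrix.of fun p q => ⟪f p, b q⟫ : Matrix (Fin m) (Fin n) ℝ) *
          Matrix.transpose (Matrix.of fun p q => ⟪f p, b q⟫ : Matrix (Fin m) (Fin n) ℝ)).mulVec α =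
          fun _ => 1) :=
  proj_mem_intrinsicInterior_iff_linear_system_general μ φ hφ b s hb m f hfrange P₀ hP₀ hP₀'

end
end

section
/- Let (𝔫, μ, ⟨·,·⟩) be a metric nilpotent Lie algebra of dimension n ≥ 2 with μ ≠ 0 whose pre-Einstein derivation vanishes, φ_μ = 0. Let {e_i}_{i=1}^n be an orthonormal basis of 𝔫 such that μ(e_n, X) = 0 for every X ∈ 𝔫, and let λ be the endomorphism that is diagonal with respect to this basis with λ e_i = e_i for i < n and λ e_n = −(n−1)·e_n. Then tr(λ) = 0 (so λ is a self-adjoint trace-free endomorphism, i.e. λ ∈ 𝔭 since id − φ_μ = id), λ is not a derivation of μ, and ν(λ;μ) := −min{ λ_i + λ_j − λ_k : 1 ≤ i < j ≤ n, 1 ≤ k ≤ n, μ^k_{ij} ≠ 0 } ≤ −1 < 0, where λ_i are the eigenvalues of λ and μ(e_i,e_j) = Σ_k μ^k_{ij} e_k. -/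
open scoped BigOperators RealInnerProductSpace

noncomputable section

variable {E : Type*} [NormedAddCommGroup E] [InnerProductSpace ℝ E] [FiniteDimensional ℝ E]

/-
Since `e_n` is central, a nonzero structure constant `μ^k_{ij}` with `i < j` forces `i, j < n`,
so its weight `λ_i + λ_j - λ_k = 2 - λ_k` is at least `1`. As `μ ≠ 0`, some weight occurs,
whence `ν(λ;μ) ≤ -1`. A diagonal derivation has all its weights equal to `0`, so `λ` is not one.
-/

theorem Module.Basis.repr_apply_of_apply_eq_smul {R M ι : Type*} [CommSemiring R]
    [AddCommMonoid M] [Module R M] (b : Module.Basis ι R M) {f : M →ₗ[R] M} {l : ι → R}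
    (hf : ∀ i, f (b i) = l i • b i) (x : M) (k : ι) :
    b.repr (f x) k = l k * b.repr x k := by
  have h : (b.coord k).comp f = l k • b.coord k := b.ext fun i => by
    obtain rfl | hik := eq_or_ne i k
    · simp [hf]
    · simp [hf, hik]
  exact LinearMap.congr_fun h x

theorem LinearMap.trace_eq_sum_of_apply_eq_smul {R M ι : Type*} [CommRing R] [AddCommGroup M]
    [Module R M] [Fintype ι] [DecidableEq ι] (b : Module.Basis ι R M) {f : M →ₗ[R] M}
    {l : ι → R} (hf : ∀ i, f (b i) = l i • b i) : LinearMap.trace R M f = ∑ i, l i := by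
  rw [LinearMap.trace_eq_matrix_trace R b f]
  refine Finset.sum_congr rfl fun i _ => ?_
  simp [LinearMap.toMatrix_apply, hf]

section BracketWeights

variable {V : Type*} [NormedAddCommGroup V] [InnerProductSpace ℝ V]
  {ι : Type*} [Fintype ι] [LinearOrder ι]

def bracketWeights (b : OrthonormalBasis ι ℝ V) (l : ι → ℝ) (μ : V →ₗ[ℝ] V →ₗ[ℝ] V) : Set ℝ :=
  {x : ℝ | ∃ i j k : ι, i < j ∧ ⟪μ (b i) (b j), b k⟫ ≠ 0 ∧ x = l i + l j - l k}

theorem bracketWeights_nonempty (b : OrthonormalBasis ι ℝ V) (l : ι → ℝ)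
    {μ : V →ₗ[ℝ] V →ₗ[ℝ] V} (hμ : μ.IsAlt) (hne : μ ≠ 0) :
    (bracketWeights b l μ).Nonempty := by
  contrapose! hne
  have hlt : ∀ i j, i < j → μ (b i) (b j) = 0 := fun i j hij =>
    InnerProductSpace.ext_inner_right_basis b.toBasis fun k => by
      by_contra h
      rw [b.coe_toBasis, inner_zero_left] at h
      exact (hne ▸ ⟨i, j, k, hij, h, rfl⟩ : l i + l j - l k ∈ (∅ : Set ℝ))
  refine LinearMap.ext_basis b.toBasis b.toBasis fun i j => ?_
  simp only [b.coe_toBasis, LinearMap.zero_apply]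
  rcases lt_trichotomy i j with h | rfl | h
  · exact hlt i j h
  · exact hμ (b i)
  · rw [← hμ.neg, hlt j i h, neg_zero]

theorem le_of_mem_bracketWeights {b : OrthonormalBasis ι ℝ V} {l : ι → ℝ}
    {μ : V →ₗ[ℝ] V →ₗ[ℝ] V} (hμ : μ.IsAlt) {m : ι} (hm : IsTop m)
    (hcentral : ∀ X, μ (b m) X = 0) {c : ℝ} (hl_le : ∀ k, l k ≤ c) (hl_eq : ∀ i, i ≠ m → l i = c)
    {x : ℝ} (hx : x ∈ bracketWeights b l μ) : c ≤ x := by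
  obtain ⟨i, j, k, hij, hijk, rfl⟩ := hx
  have hj : j ≠ m := by
    rintro rfl
    rw [← hμ.neg, hcentral, neg_zero, inner_zero_left] at hijk
    exact hijk rfl
  rw [hl_eq i (hij.trans_le (hm j)).ne, hl_eq j hj]
  linarith [hl_le k]

theorem eq_zero_of_mem_bracketWeights_of_isDerivation
    {b : OrthonormalBasis ι ℝ V} {l : ι → ℝ} {μ : V →ₗ[ℝ] V →ₗ[ℝ] V} {f : V →ₗ[ℝ] V}
    (hf_der : IsDerivation μ f) (hf : ∀ i, f (b i) = l i • b i) {x : ℝ}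
    (hx : x ∈ bracketWeights b l μ) : x = 0 := by
  obtain ⟨i, j, k, -, hijk, rfl⟩ := hx
  have hbracket : f (μ (b i) (b j)) = (l i + l j) • μ (b i) (b j) := by
    rw [hf_der, hf, hf, LinearMap.map_smul₂, map_smul, add_smul]
  have hcoord := congrArg (fun v => b.toBasis.repr v k) hbracket
  simp only [b.toBasis.repr_apply_of_apply_eq_smul (by simpa using hf), map_smul,
    Finsupp.smul_apply, smul_eq_mul, b.coe_toBasis_repr_apply, b.repr_apply_apply] at hcoord
  rw [real_inner_comm] at hijk
  have : (l i + l j - l k) * ⟪b k, μ (b i) (b j)⟫ = 0 := by linarith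
  exact (mul_eq_zero.mp this).resolve_right hijk

end BracketWeights

theorem obstruction_of_preEinstein_eq_zero {n : ℕ} (hn : 2 ≤ n)
    (μ : E →ₗ[ℝ] E →ₗ[ℝ] E) (hμ : IsLieBracket μ)
    (hne : μ ≠ 0)
    (b : OrthonormalBasis (Fin n) ℝ E)
    (hcentral : ∀ X : E, μ (b ⟨n - 1, by omega⟩) X = 0)
    (l : Fin n → ℝ)
    (hl : ∀ i : Fin n, l i = if (i : ℕ) = n - 1 then -((n : ℝ) - 1) else 1)
    (lam : E →ₗ[ℝ] E) (hlam : ∀ i, lam (b i) = l i • b i) :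
    LinearMap.trace ℝ E lam = 0 ∧ ¬ IsDerivation μ lam ∧
    nu b l μ ≤ -1 ∧ nu b l μ < 0 := by
  set m : Fin n := ⟨n - 1, by omega⟩
  have hm : IsTop m := fun i => Fin.mk_le_mk.mpr (by omega)
  have hl_m : l m = -((n : ℝ) - 1) := by simp [hl, m]
  have hl_one : ∀ i, i ≠ m → l i = 1 := fun i hi => by
    rw [hl, if_neg fun h => hi (Fin.ext h)]
  have hl_le : ∀ k, l k ≤ 1 := fun k => by
    by_cases hk : k = m
    · rw [hk, hl_m]; linarith [(show (2 : ℝ) ≤ n by exact_mod_cast hn)]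
    · exact (hl_one k hk).le
  have htrace : ∑ i, l i = 0 := by
    rw [← Finset.add_sum_erase _ _ (Finset.mem_univ m),
      Finset.sum_congr rfl fun i hi => hl_one i (Finset.ne_of_mem_erase hi), hl_m]
    simp [Finset.card_erase_of_mem, Nat.cast_sub (by omega : 1 ≤ n)]
  have hnu : nu b l μ = -sInf (bracketWeights b l μ) := rfl
  have hweights := bracketWeights_nonempty b l hμ.1 hne
  have hbound : ∀ x ∈ bracketWeights b l μ, 1 ≤ x := fun x hx =>
    le_of_mem_bracketWeights hμ.1 hm hcentral hl_le hl_one hx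
  refine ⟨(LinearMap.trace_eq_sum_of_apply_eq_smul b.toBasis (by simpa using hlam)).trans htrace,
    fun hder => ?_, ?_, ?_⟩
  · obtain ⟨x, hx⟩ := hweights
    linarith [hbound x hx, eq_zero_of_mem_bracketWeights_of_isDerivation hder hlam hx]
  · exact hnu ▸ neg_le_neg (le_csInf hweights hbound)
  · linarith [hnu ▸ neg_le_neg (le_csInf hweights hbound)]

end
end

section
/- Let (𝔫, μ, ⟨·,·⟩) be a metric nilpotent Lie algebra with μ ≠ 0, whose inner product is compatible with a pre-Einstein derivation φ_μ, and let B = {e_i} be an orthonormal basis of eigenvectors of φ_μ with (id − φ_μ)e_i = s_i·e_i. Then: (a) s_i + s_j − s_k = 1 for all 1 ≤ i < j ≤ n and 1 ≤ k ≤ n with μ^k_{ij} ≠ 0; (b) Σ_{l=1}^n s_l² > 0, the orthogonal projection P₀ of the origin of 𝔫 onto the affine span L_B of F_B equals (Σ_{i=1}^n s_i e_i)/(Σ_{l=1}^n s_l²), and consequently ‖P₀‖² = 1/(Σ_{l=1}^n s_l²) ≠ 0. -/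
open scoped BigOperators RealInnerProductSpace

noncomputable section

variable {E : Type*} [NormedAddCommGroup E] [InnerProductSpace ℝ E] [FiniteDimensional ℝ E]

/-! The eigenvalues `1 - sᵢ` of the symmetric derivation `φ` add up along every nonzero structure
constant `μᵏᵢⱼ`; this is (a), and it says that `v = ∑ sᵢ eᵢ` satisfies `⟪v, x⟫ = 1` on `F_B`.
If `u ⊥ F_B`, the coordinates `⟪eᵢ, u⟫` are additive in the same way, so they are the eigenvalues of
a diagonal derivation `ψ`, and `tr (φ ∘ ψ) = tr ψ` reads `⟪v, u⟫ = 0`; hence `v ∈ span F_B`.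
Because `⟪v, ·⟫ = 1` on `F_B`, the vector `v / ‖v‖²` of `span F_B` lies on `L_B`, and it is
orthogonal to the direction of `L_B`, so it is the foot `P₀` of the perpendicular from `0`. -/

theorem LinearMap.trace_eq_sum_of_apply_basis_eq_smul {R M ι : Type*} [CommRing R]
    [AddCommGroup M] [Module R M] [Fintype ι] [DecidableEq ι] (b : Module.Basis ι R M)
    {T : M →ₗ[R] M} {c : ι → R} (h : ∀ i, T (b i) = c i • b i) :
    LinearMap.trace R M T = ∑ i, c i := by
  have hT : T = Matrix.toLin b b (Matrix.diagonal c) :=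
    b.ext fun i => by simp [h, Matrix.toLin_self, Matrix.diagonal_apply, ite_smul]
  rw [hT, LinearMap.trace_eq_matrix_trace R b, LinearMap.toMatrix_toLin, Matrix.trace_diagonal]

section

omit [FiniteDimensional ℝ E]

variable {μ : E →ₗ[ℝ] E →ₗ[ℝ] E}

theorem IsDerivation.add_eq_of_inner_ne_zero_s19 {D : E →ₗ[ℝ] E} (hD : IsDerivation μ D)
    (hsym : D.IsSymmetric) {x y z : E} {a b c : ℝ} (hx : D x = a • x) (hy : D y = b • y)
    (hz : D z = c • z) (h : ⟪μ x y, z⟫ ≠ 0) : a + b = c := by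
  refine mul_right_cancel₀ h ?_
  calc (a + b) * ⟪μ x y, z⟫ = ⟪D (μ x y), z⟫ := by
        rw [hD, hx, hy, map_smul, map_smul, LinearMap.smul_apply, ← add_smul,
          real_inner_smul_left]
    _ = ⟪μ x y, D z⟫ := hsym _ _
    _ = c * ⟪μ x y, z⟫ := by rw [hz, real_inner_smul_right]

theorem isDerivation_of_basis {ι : Type*} (b : Module.Basis ι ℝ E) {D : E →ₗ[ℝ] E}
    (h : ∀ i j, D (μ (b i) (b j)) = μ (D (b i)) (b j) + μ (b i) (D (b j))) :
    IsDerivation μ D := by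
  have hD : μ.compr₂ D = μ ∘ₗ D + μ.compl₂ D :=
    LinearMap.ext_basis b b fun i j => by simpa using h i j
  intro X Y
  simpa using LinearMap.congr_fun₂ hD X Y

theorem isDerivation_of_apply_basis_eq_smul {ι : Type*} [Fintype ι]
    (b : OrthonormalBasis ι ℝ E) {D : E →ₗ[ℝ] E} {d : ι → ℝ} (hDb : ∀ i, D (b i) = d i • b i)
    (hd : ∀ i j k, ⟪μ (b i) (b j), b k⟫ ≠ 0 → d i + d j = d k) : IsDerivation μ D := by
  refine isDerivation_of_basis b.toBasis fun i j => ?_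
  simp only [OrthonormalBasis.coe_toBasis, hDb, map_smul, LinearMap.smul_apply, ← add_smul]
  conv_lhs => rw [← b.sum_repr' (μ (b i) (b j))]
  conv_rhs => rw [← b.sum_repr' (μ (b i) (b j))]
  rw [map_sum, Finset.smul_sum]
  refine Finset.sum_congr rfl fun k _ => ?_
  rw [map_smul, hDb, smul_smul, smul_smul]
  by_cases h : ⟪b k, μ (b i) (b j)⟫ = 0
  · simp [h]
  · rw [hd i j k (by rwa [real_inner_comm]), mul_comm]

theorem exists_inner_apply_basis_ne_zero {ι : Type*} [Fintype ι] (b : OrthonormalBasis ι ℝ E)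
    (hμ : μ ≠ 0) : ∃ i j k, ⟪μ (b i) (b j), b k⟫ ≠ 0 := by
  contrapose! hμ
  exact LinearMap.ext_basis b.toBasis b.toBasis fun i j =>
    InnerProductSpace.ext_inner_right_basis b.toBasis fun k => by simpa using hμ i j k

theorem add_sub_mem_FB {n : ℕ} {b : OrthonormalBasis (Fin n) ℝ E} (hμ : μ.IsAlt)
    {i j k : Fin n} (h : ⟪μ (b i) (b j), b k⟫ ≠ 0) : b i + b j - b k ∈ FB b μ := by
  rcases lt_trichotomy i j with hij | rfl | hij
  · exact ⟨i, j, k, hij, h, rfl⟩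
  · exact absurd (by rw [hμ.self_eq_zero, inner_zero_left]) h
  · refine ⟨j, i, k, hij, ?_, by rw [add_comm (b i)]⟩
    rwa [← hμ.neg, inner_neg_left, neg_ne_zero]

variable {S : Set E} {v : E}

theorem inner_eq_zero_of_mem_vectorSpan {c : ℝ} (hS : ∀ x ∈ S, ⟪v, x⟫ = c) {z : E}
    (hz : z ∈ vectorSpan ℝ S) : ⟪v, z⟫ = 0 := by
  have hker : vectorSpan ℝ S ≤ LinearMap.ker (innerₛₗ ℝ v) := by
    rw [vectorSpan_def, Submodule.span_le]
    rintro _ ⟨x, hx, y, hy, rfl⟩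
    simp [inner_sub_right, hS x hx, hS y hy]
  simpa using hker hz

theorem sub_inner_smul_mem_vectorSpan (hS : ∀ x ∈ S, ⟪v, x⟫ = 1) {x₀ : E} (hx₀ : x₀ ∈ S)
    {w : E} (hw : w ∈ Submodule.span ℝ S) : w - ⟪v, w⟫ • x₀ ∈ vectorSpan ℝ S := by
  induction hw using Submodule.span_induction with
  | mem x hx => rw [hS x hx, one_smul]; exact vsub_mem_vectorSpan ℝ hx hx₀
  | zero => simp
  | add x y _ _ hx hy =>
    convert add_mem hx hy using 1
    rw [inner_add_right, add_smul]
    abel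
  | smul c x _ hx =>
    convert Submodule.smul_mem _ c hx using 1
    rw [real_inner_smul_right, smul_sub, smul_smul]

theorem inv_norm_sq_smul_mem_affineSpan (hS : ∀ x ∈ S, ⟪v, x⟫ = 1) (hne : S.Nonempty)
    (hv : v ∈ Submodule.span ℝ S) : (‖v‖ ^ 2)⁻¹ • v ∈ affineSpan ℝ S := by
  obtain ⟨x₀, hx₀⟩ := hne
  have hv0 : ‖v‖ ^ 2 ≠ 0 := by
    have := hS x₀ hx₀
    contrapose! this
    simp_all
  have hdir : (‖v‖ ^ 2)⁻¹ • v - x₀ ∈ (affineSpan ℝ S).direction := by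
    rw [direction_affineSpan]
    convert Submodule.smul_mem _ (‖v‖ ^ 2)⁻¹ (sub_inner_smul_mem_vectorSpan hS hx₀ hv) using 1
    rw [real_inner_self_eq_norm_sq, smul_sub, smul_smul, inv_mul_cancel₀ hv0, one_smul]
  simpa using AffineSubspace.vadd_mem_of_mem_direction hdir (mem_affineSpan ℝ hx₀)

theorem eq_of_inner_sub_eq_zero {A : AffineSubspace ℝ E} {p q : E} (hp : p ∈ A) (hq : q ∈ A)
    (hp' : ∀ w ∈ A, ⟪p, w - p⟫ = 0) (hq' : ∀ w ∈ A, ⟪q, w - q⟫ = 0) : p = q := by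
  rw [← sub_eq_zero, ← inner_self_eq_zero (𝕜 := ℝ), inner_sub_left, hq' p hp, sub_zero,
    ← neg_sub, inner_neg_right, hp' q hq, neg_zero]

theorem eq_inv_norm_sq_smul_of_inner_sub_eq_zero (hS : ∀ x ∈ S, ⟪v, x⟫ = 1) (hne : S.Nonempty)
    (hv : v ∈ Submodule.span ℝ S) {P : E} (hP : P ∈ affineSpan ℝ S)
    (hP' : ∀ w ∈ affineSpan ℝ S, ⟪P, w - P⟫ = 0) : P = (‖v‖ ^ 2)⁻¹ • v := by
  have hmem := inv_norm_sq_smul_mem_affineSpan hS hne hv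
  refine eq_of_inner_sub_eq_zero hP hmem hP' fun w hw => ?_
  have hdir := AffineSubspace.vsub_mem_direction hw hmem
  rw [direction_affineSpan, vsub_eq_sub] at hdir
  rw [real_inner_smul_left, inner_eq_zero_of_mem_vectorSpan hS hdir, mul_zero]

end

theorem IsPreEinstein.sum_smul_mem_span_FB {n : ℕ} {φ : E →ₗ[ℝ] E} (hμ : μ.IsAlt)
    (hφ : IsPreEinstein μ φ) (b : OrthonormalBasis (Fin n) ℝ E) {s : Fin n → ℝ}
    (hφb : ∀ i, φ (b i) = (1 - s i) • b i) :
    ∑ i, s i • b i ∈ Submodule.span ℝ (FB b μ) := by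
  rw [← Submodule.orthogonal_orthogonal (Submodule.span ℝ (FB b μ)), Submodule.mem_orthogonal]
  intro u hu
  set d : Fin n → ℝ := fun i => ⟪b i, u⟫
  have hd : ∀ i j k, ⟪μ (b i) (b j), b k⟫ ≠ 0 → d i + d j = d k := fun i j k h => by
    have hperp := hu _ (Submodule.subset_span (add_sub_mem_FB hμ h))
    rw [inner_sub_left, inner_add_left] at hperp
    simp only [d]
    linarith
  set ψ := b.toBasis.constr ℝ fun i => d i • b i
  have hψb (i : Fin n) : ψ (b i) = d i • b i := by
    have h := b.toBasis.constr_basis ℝ (fun i => d i • b i) i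
    rwa [OrthonormalBasis.coe_toBasis] at h
  have htrace := hφ.2.2 ψ (isDerivation_of_apply_basis_eq_smul b hψb hd)
  rw [LinearMap.trace_eq_sum_of_apply_basis_eq_smul b.toBasis (T := ψ) (c := d)
      (by simpa using hψb),
    LinearMap.trace_eq_sum_of_apply_basis_eq_smul b.toBasis (c := fun i => (1 - s i) * d i)
      (by simp [hψb, hφb, smul_smul, mul_comm])] at htrace
  simp only [sub_mul, one_mul, Finset.sum_sub_distrib] at htrace
  have hsd : ∑ i, s i * d i = 0 := by linarith
  simpa [inner_sum, real_inner_smul_right, real_inner_comm u, d] using hsd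

theorem structure_constants_and_projection_general {n : ℕ}
    (μ : E →ₗ[ℝ] E →ₗ[ℝ] E) (hμ : IsLieBracket μ)
    (hne : μ ≠ 0) (φ : E →ₗ[ℝ] E) (hφ : IsPreEinstein μ φ) (hcompat : φ.IsSymmetric)
    (b : OrthonormalBasis (Fin n) ℝ E) (s : Fin n → ℝ)
    (hb : ∀ i, (LinearMap.id - φ : E →ₗ[ℝ] E) (b i) = s i • b i)
    (P₀ : E) (hP₀ : P₀ ∈ affineSpan ℝ (FB b μ))
    (hP₀' : ∀ w ∈ affineSpan ℝ (FB b μ), ⟪P₀, w - P₀⟫ = 0) :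
    (∀ i j k : Fin n, i < j → ⟪μ (b i) (b j), b k⟫ ≠ 0 → s i + s j - s k = 1) ∧
    0 < ∑ i, s i ^ 2 ∧
    P₀ = (∑ i, s i ^ 2)⁻¹ • ∑ i, s i • b i ∧
    ‖P₀‖ ^ 2 = (∑ i, s i ^ 2)⁻¹ := by
  have hφb : ∀ i, φ (b i) = (1 - s i) • b i := fun i => by
    rw [sub_smul, one_smul, ← hb i, LinearMap.sub_apply, LinearMap.id_apply, sub_sub_cancel]
  have ha : ∀ i j k, ⟪μ (b i) (b j), b k⟫ ≠ 0 → s i + s j - s k = 1 := fun i j k h => by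
    linarith [hφ.1.add_eq_of_inner_ne_zero_s19 hcompat (hφb i) (hφb j) (hφb k) h]
  set v := ∑ i, s i • b i
  have hv_repr : v = b.repr.symm (WithLp.toLp 2 s) := by
    simpa using b.sum_repr_symm (WithLp.toLp 2 s)
  have hvb (i : Fin n) : ⟪v, b i⟫ = s i := by
    rw [real_inner_comm, ← b.repr_apply_apply, hv_repr, LinearIsometryEquiv.apply_symm_apply]
  have hvF : ∀ x ∈ FB b μ, ⟪v, x⟫ = 1 := by
    rintro _ ⟨i, j, k, -, h, rfl⟩
    rw [inner_sub_right, inner_add_right, hvb, hvb, hvb]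
    exact ha i j k h
  obtain ⟨i, j, k, h⟩ := exists_inner_apply_basis_ne_zero b hne
  have hx₀ := add_sub_mem_FB hμ.1 h
  have hv : ‖v‖ ^ 2 = ∑ i, s i ^ 2 := by simp [hv_repr, EuclideanSpace.norm_sq_eq]
  have hv0 : v ≠ 0 := fun h0 => by simpa [h0] using hvF _ hx₀
  have hP := eq_inv_norm_sq_smul_of_inner_sub_eq_zero hvF ⟨_, hx₀⟩
    (hφ.sum_smul_mem_span_FB hμ.1 b hφb) hP₀ hP₀'
  refine ⟨fun i j k _ => ha i j k, hv ▸ pow_pos (norm_pos_iff.2 hv0) 2, hv ▸ hP, ?_⟩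
  rw [hP, norm_smul, mul_pow, norm_inv, norm_pow, norm_norm, ← hv]
  field_simp

theorem structure_constants_and_projection {n : ℕ} (hn : 1 ≤ n)
    (μ : E →ₗ[ℝ] E →ₗ[ℝ] E) (hμ : IsLieBracket μ) (hnil : IsNilpotentBracket μ)
    (hne : μ ≠ 0) (φ : E →ₗ[ℝ] E) (hφ : IsPreEinstein μ φ) (hcompat : φ.IsSymmetric)
    (b : OrthonormalBasis (Fin n) ℝ E) (s : Fin n → ℝ)
    (hb : ∀ i, (LinearMap.id - φ : E →ₗ[ℝ] E) (b i) = s i • b i)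
    (P₀ : E) (hP₀ : P₀ ∈ affineSpan ℝ (FB b μ))
    (hP₀' : ∀ w ∈ affineSpan ℝ (FB b μ), ⟪P₀, w - P₀⟫ = 0) :
    (∀ i j k : Fin n, i < j → ⟪μ (b i) (b j), b k⟫ ≠ 0 → s i + s j - s k = 1) ∧
    0 < ∑ i, s i ^ 2 ∧
    P₀ = (∑ i, s i ^ 2)⁻¹ • ∑ i, s i • b i ∧
    ‖P₀‖ ^ 2 = (∑ i, s i ^ 2)⁻¹ :=
  structure_constants_and_projection_general μ hμ hne φ hφ hcompat b s hb P₀ hP₀ hP₀'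
end
end
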